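/- arXiv:2511.21645 — 5 statements merged into one kernel-verified Lean document; each statement's English description precedes it below -/
import Mathlib

section
/- Given a, b, α > 0, there exist constants C > 0 and μ* > 0, depending only on a, b, α, such that for every μ > μ* and every t ≥ 0, ∫_0^t exp(-μ(t-s)) (b + a s)^{-α} ds ≤ (C/μ) (b + a t)^{-α}. -/
open Real MeasureTheory intervalIntegral

/-!
If `w' ≥ -κ w` on `[t₀, t]` and `μ > κ`, then `g s = e^{-μ(t-s)} w(s) / (μ - κ)` satisfies
`g' ≥ e^{-μ(t-s)} w(s)`, so integrating gives `∫ e^{-μ(t-s)} w(s) ds ≤ g t - g t₀ ≤ w(t) / (μ - κ)`.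
For `w(s) = (b + a s)^{-α}` one has `w' = -α a w / (b + a s) ≥ -(α a / b) w`, and `μ ≥ 2 α a / b`
turns `1 / (μ - α a / b)` into `2 / μ`.
-/

theorem integral_exp_mul_le_div_sub_of_deriv_ge {w w' : ℝ → ℝ} {κ μ t₀ t : ℝ} (ht : t₀ ≤ t)
    (hκμ : κ < μ) (hw : ContinuousOn w (Set.Icc t₀ t))
    (hderiv : ∀ s ∈ Set.Ioo t₀ t, HasDerivAt w (w' s) s)
    (hw' : ∀ s ∈ Set.Ioo t₀ t, -κ * w s ≤ w' s) (hw₀ : 0 ≤ w t₀) :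
    (∫ s in t₀..t, exp (-μ * (t - s)) * w s) ≤ w t / (μ - κ) := by
  have hμκ : 0 < μ - κ := sub_pos.mpr hκμ
  have hexp : Continuous fun s => exp (-μ * (t - s)) := by fun_prop
  have hexp_deriv (s : ℝ) :
      HasDerivAt (fun s => exp (-μ * (t - s))) (μ * exp (-μ * (t - s))) s := by
    simpa [mul_comm] using ((((hasDerivAt_id s).const_sub t).const_mul (-μ)).exp)
  set g : ℝ → ℝ := fun s => exp (-μ * (t - s)) * w s / (μ - κ)
  have hle : (∫ s in t₀..t, exp (-μ * (t - s)) * w s) ≤ g t - g t₀ := by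
    refine integral_le_sub_of_hasDeriv_right_of_le ht
      ((hexp.continuousOn.mul hw).div_const _)
      (fun s hs => (((hexp_deriv s).mul (hderiv s hs)).div_const _).hasDerivWithinAt)
      ((hexp.continuousOn.mul hw).integrableOn_Icc) (fun s hs => ?_)
    rw [le_div_iff₀ hμκ]
    have := mul_le_mul_of_nonneg_left (hw' s hs) (exp_pos (-μ * (t - s))).le
    linarith
  have hg₀ : 0 ≤ g t₀ := by positivity
  calc (∫ s in t₀..t, exp (-μ * (t - s)) * w s) ≤ g t - g t₀ := hle
    _ ≤ g t := by linarith
    _ = w t / (μ - κ) := by simp [g]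

theorem neg_mul_affine_rpow_neg_le_deriv {a b α s : ℝ} (ha : 0 ≤ a) (hb : 0 < b) (hα : 0 ≤ α)
    (hs : 0 ≤ s) : -(α * a / b) * (b + a * s) ^ (-α) ≤ a * -α * (b + a * s) ^ (-α - 1) := by
  have hpos : 0 < b + a * s := by positivity
  have hsub : (b + a * s) ^ (-α - 1) ≤ (b + a * s) ^ (-α) / b := by
    rw [rpow_sub hpos, rpow_one]
    exact div_le_div_of_nonneg_left (by positivity) hb (by nlinarith)
  calc -(α * a / b) * (b + a * s) ^ (-α) = -(a * α) * ((b + a * s) ^ (-α) / b) := by ring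
    _ ≤ -(a * α) * (b + a * s) ^ (-α - 1) :=
        mul_le_mul_of_nonpos_left hsub (neg_nonpos.mpr (by positivity))
    _ = a * -α * (b + a * s) ^ (-α - 1) := by ring

/-- Weighted exponential convolution estimate for algebraically decaying weights. -/
theorem exp_conv_algebraic_decay (a b α : ℝ) (ha : 0 < a) (hb : 0 < b) (hα : 0 < α) :
    ∃ C > (0 : ℝ), ∃ μstar > (0 : ℝ), ∀ μ > μstar, ∀ t ≥ (0 : ℝ),
      (∫ s in (0 : ℝ)..t, Real.exp (-μ * (t - s)) * (b + a * s) ^ (-α))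
        ≤ C / μ * (b + a * t) ^ (-α) := by
  refine ⟨2, two_pos, 4 * α * a / b, by positivity, fun μ hμ t ht => ?_⟩
  have hκ : 0 < α * a / b := by positivity
  have hμκ : 2 * (α * a / b) ≤ μ := by linarith [show 4 * α * a / b = 4 * (α * a / b) by ring]
  have hbase {s : ℝ} (hs : s ∈ Set.Icc 0 t) : 0 < b + a * s := by nlinarith [hs.1]
  have hw_deriv (s : ℝ) (hs : s ∈ Set.Icc 0 t) :
      HasDerivAt (fun s => (b + a * s) ^ (-α)) (a * -α * (b + a * s) ^ (-α - 1)) s :=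
    (((hasDerivAt_id s).const_mul a).const_add b).rpow_const (Or.inl (hbase hs).ne') |>.congr_deriv
      (by simp)
  calc (∫ s in (0 : ℝ)..t, exp (-μ * (t - s)) * (b + a * s) ^ (-α))
      ≤ (b + a * t) ^ (-α) / (μ - α * a / b) := by
        refine integral_exp_mul_le_div_sub_of_deriv_ge ht (by linarith)
          (fun s hs => (hw_deriv s hs).continuousAt.continuousWithinAt)
          (fun s hs => hw_deriv s (Set.Ioo_subset_Icc_self hs))
          (fun s hs => neg_mul_affine_rpow_neg_le_deriv ha.le hb hα.le hs.1.le) (by positivity)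
    _ ≤ 2 / μ * (b + a * t) ^ (-α) := by
        rw [div_eq_inv_mul]
        gcongr
        rw [inv_eq_one_div, div_le_div_iff₀ (by linarith) (by linarith)]
        linarith
end

section
/- Let e : [0,∞) → (0,1] satisfy e(r) + a₀ r^{1/5} e(r)^{3/5} = 1 for r > 0, with e differentiable on (0,∞). Then the derivative of η(r) = r e(r) satisfies η'(r) = e(r) · (e(r) + (2/5)(1−e(r))) / (e(r) + (3/5)(1−e(r))) for all r > 0; in particular η'(r) ≥ (2/5) e(r). -/
/-! Differentiating `e s + a₀ s^(1/5) e(s)^(3/5) = 1` at `r` and substituting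
`a₀ r^(1/5) e(r)^(3/5) = 1 - e(r)` gives `r e'(r) (e + (3/5)(1 - e)) = -(1/5) e (1 - e)`,
so `η' = e + r e'` is the stated quotient; the lower bound reduces to `0 ≤ 11 e + 4`. -/

open Real Filter Topology

section ImplicitRpow

variable {e : ℝ → ℝ} {e' a p q r : ℝ}

theorem HasDerivAt.implicit_rpow_relation (hd : HasDerivAt e e' r) (hr : 0 < r) (he : 0 < e r)
    (hrel : ∀ᶠ s in 𝓝 r, e s + a * s ^ p * e s ^ q = 1) :
    r * e' * (e r + q * (1 - e r)) = -(p * e r * (1 - e r)) := by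
  have hF : HasDerivAt (fun s => e s + a * s ^ p * e s ^ q)
      (e' + a * (p * r ^ (p - 1)) * e r ^ q + a * r ^ p * (e' * q * e r ^ (q - 1))) r :=
    (hd.add (((hasDerivAt_rpow_const (Or.inl hr.ne')).const_mul a).mul
      (hd.rpow_const (Or.inl he.ne')))).congr_deriv (by ring)
  have hzero := hF.unique ((hasDerivAt_const r 1).congr_of_eventuallyEq hrel)
  have hA : a * r ^ p * e r ^ q = 1 - e r := by linarith [hrel.self_of_nhds]
  rw [rpow_sub_one hr.ne', rpow_sub_one he.ne'] at hzero
  field_simp at hzero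
  linear_combination hzero - (e r * p + q * e' * r) * hA

theorem HasDerivAt.mul_self_of_rpow_relation (hd : HasDerivAt e e' r) (hr : 0 < r) (he : 0 < e r)
    (hrel : ∀ᶠ s in 𝓝 r, e s + a * s ^ p * e s ^ q = 1) (hden : e r + q * (1 - e r) ≠ 0) :
    HasDerivAt (fun s => s * e s)
      (e r * (e r + (q - p) * (1 - e r)) / (e r + q * (1 - e r))) r := by
  have hrel' := hd.implicit_rpow_relation hr he hrel
  refine ((hasDerivAt_id r).mul hd).congr_deriv ?_
  rw [eq_div_iff hden, id]
  linear_combination hrel'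

end ImplicitRpow

theorem two_fifths_mul_le_div {x : ℝ} (hx : 0 ≤ x) :
    2 / 5 * x ≤ x * (x + 2 / 5 * (1 - x)) / (x + 3 / 5 * (1 - x)) := by
  rw [le_div_iff₀ (by linarith)]
  nlinarith

theorem viscoelastic_eta_deriv_general (a₀ : ℝ) (e e' : ℝ → ℝ)
    (hrange : ∀ r ≥ (0 : ℝ), 0 < e r ∧ e r ≤ 1)
    (himp : ∀ r > (0 : ℝ), e r + a₀ * r ^ ((1 : ℝ) / 5) * (e r) ^ ((3 : ℝ) / 5) = 1)
    (hderiv : ∀ r > (0 : ℝ), HasDerivAt e (e' r) r) :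
    ∀ r > (0 : ℝ),
      HasDerivAt (fun s => s * e s)
        (e r * (e r + 2 / 5 * (1 - e r)) / (e r + 3 / 5 * (1 - e r))) r
      ∧ 2 / 5 * e r ≤ e r * (e r + 2 / 5 * (1 - e r)) / (e r + 3 / 5 * (1 - e r)) := by
  intro r hr
  have he := (hrange r hr.le).1
  have hrel : ∀ᶠ s in 𝓝 r, e s + a₀ * s ^ ((1 : ℝ) / 5) * e s ^ ((3 : ℝ) / 5) = 1 :=
    eventually_of_mem (Ioi_mem_nhds hr) himp
  refine ⟨?_, two_fifths_mul_le_div he.le⟩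
  convert (hderiv r hr).mul_self_of_rpow_relation hr he hrel (by linarith) using 3
  norm_num

/-- Explicit formula and lower bound for `η'(r)` where `η(r) = r e(r)` and `e`
is the viscoelastic restitution coefficient. -/
theorem viscoelastic_eta_deriv (a₀ : ℝ) (ha : 0 < a₀) (e e' : ℝ → ℝ)
    (hrange : ∀ r ≥ (0 : ℝ), 0 < e r ∧ e r ≤ 1)
    (himp : ∀ r > (0 : ℝ), e r + a₀ * r ^ ((1 : ℝ) / 5) * (e r) ^ ((3 : ℝ) / 5) = 1)
    (hderiv : ∀ r > (0 : ℝ), HasDerivAt e (e' r) r) :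
    ∀ r > (0 : ℝ),
      HasDerivAt (fun s => s * e s)
        (e r * (e r + 2 / 5 * (1 - e r)) / (e r + 3 / 5 * (1 - e r))) r
      ∧ 2 / 5 * e r ≤ e r * (e r + 2 / 5 * (1 - e r)) / (e r + 3 / 5 * (1 - e r)) :=
  viscoelastic_eta_deriv_general a₀ e e' hrange himp hderiv
end

section
/- Let e : [0,∞) → (0,1] satisfy the implicit relation e(r) + a₀ r^{1/5} e(r)^{3/5} = 1 (r > 0) and let η(r) = r e(r). Then for all r > 0, |η'(r) − e(r)| = e(r)(1−e(r)) / (3 + 2e(r)) ≤ 1 − e(r). -/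
open Real Filter Topology

/- Differentiating the implicit relation `e + a r^p e^q = 1` and eliminating `a r^p e^q = 1 - e`
gives the linear equation `r e' (e + q (1 - e)) = -p e (1 - e)` for `e'`; with `p = 1/5`, `q = 3/5`
this says `η' - e = r e' = -e (1 - e) / (3 + 2e)`, whose modulus is at most `1 - e`. -/

theorem hasDerivAt_of_hasDerivAt_mul_self {f : ℝ → ℝ} {r d : ℝ} (hr : r ≠ 0)
    (h : HasDerivAt (fun s => s * f s) d r) : HasDerivAt f ((d - f r) / r) r := by
  have hquot := h.div (hasDerivAt_id' r) hr
  have hf : f =ᶠ[𝓝 r] fun s => s * f s / s := by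
    filter_upwards [isOpen_ne.mem_nhds hr] with s hs
    rw [mul_div_cancel_left₀ _ hs]
  refine (hquot.congr_of_eventuallyEq hf).congr_deriv ?_
  field_simp

theorem mul_deriv_of_add_mul_rpow_mul_rpow_eq_one {e : ℝ → ℝ} {a p q r e' : ℝ}
    (hr : 0 < r) (he : 0 < e r) (hde : HasDerivAt e e' r)
    (himp : ∀ᶠ s in 𝓝 r, e s + a * s ^ p * e s ^ q = 1) :
    r * e' * (e r + q * (1 - e r)) = -(p * e r * (1 - e r)) := by
  have hF := hde.add (((hasDerivAt_rpow_const (p := p) (Or.inl hr.ne')).const_mul a).mul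
    (hde.rpow_const (p := q) (Or.inl he.ne')))
  have hF0 := (hasDerivAt_const r (1 : ℝ)).congr_of_eventuallyEq himp
  have hderiv_zero := hF.unique hF0
  have hr_pow : r ^ (p - 1) * r = r ^ p := by rw [rpow_sub_one hr.ne', div_mul_cancel₀ _ hr.ne']
  have he_pow : e r ^ (q - 1) * e r = e r ^ q := by
    rw [rpow_sub_one he.ne', div_mul_cancel₀ _ he.ne']
  linear_combination (r * e r) * hderiv_zero - a * p * e r ^ q * e r * hr_pow
    - a * r ^ p * e' * q * r * he_pow - (q * r * e' + p * e r) * himp.self_of_nhds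

theorem viscoelastic_eta_deriv_close_general (a₀ : ℝ) (e : ℝ → ℝ)
    (hrange : ∀ r ≥ (0 : ℝ), 0 < e r ∧ e r ≤ 1)
    (himp : ∀ r > (0 : ℝ), e r + a₀ * r ^ ((1 : ℝ) / 5) * (e r) ^ ((3 : ℝ) / 5) = 1) :
    ∀ r > (0 : ℝ), ∀ d : ℝ, HasDerivAt (fun s => s * e s) d r →
      |d - e r| = e r * (1 - e r) / (3 + 2 * e r) ∧ |d - e r| ≤ 1 - e r := by
  intro r hr d hd
  obtain ⟨he_pos, he_le_one⟩ := hrange r hr.le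
  have hlinear := mul_deriv_of_add_mul_rpow_mul_rpow_eq_one hr he_pos
    (hasDerivAt_of_hasDerivAt_mul_self hr.ne' hd) ((eventually_gt_nhds hr).mono himp)
  have hdenom : 0 < 3 + 2 * e r := by linarith
  have hdiff : d - e r = -(e r * (1 - e r) / (3 + 2 * e r)) := by
    field_simp at hlinear ⊢
    linarith
  have hnonneg : 0 ≤ e r * (1 - e r) / (3 + 2 * e r) :=
    div_nonneg (mul_nonneg he_pos.le (sub_nonneg.mpr he_le_one)) hdenom.le
  rw [hdiff, abs_neg, abs_of_nonneg hnonneg]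
  refine ⟨rfl, ?_⟩
  rw [div_le_iff₀ hdenom]
  nlinarith

/-- For the viscoelastic restitution coefficient,
`|η'(r) − e(r)| = e(r)(1−e(r))/(3+2e(r)) ≤ 1 − e(r)`. -/
theorem viscoelastic_eta_deriv_close (a₀ : ℝ) (ha : 0 < a₀) (e e' : ℝ → ℝ)
    (hrange : ∀ r ≥ (0 : ℝ), 0 < e r ∧ e r ≤ 1)
    (himp : ∀ r > (0 : ℝ), e r + a₀ * r ^ ((1 : ℝ) / 5) * (e r) ^ ((3 : ℝ) / 5) = 1)
    (hderiv : ∀ r > (0 : ℝ), HasDerivAt e (e' r) r) :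
    ∀ r > (0 : ℝ), ∀ d : ℝ, HasDerivAt (fun s => s * e s) d r →
      |d - e r| = e r * (1 - e r) / (3 + 2 * e r) ∧ |d - e r| ≤ 1 - e r :=
  viscoelastic_eta_deriv_close_general a₀ e hrange himp
end

section
/- Let e : [0,∞) → (0,1] be the viscoelastic restitution coefficient satisfying e(r) + a₀ r^{1/5} e(r)^{3/5} = 1 for r > 0. Then e(r) · a₀^{5/3} r^{1/3} → 1 as r → ∞. -/
open Real Filter

/-- Asymptotics of the viscoelastic restitution coefficient:
`e(r) ~ a₀^{-5/3} r^{-1/3}` as `r → ∞`. -/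
theorem viscoelastic_asymptotics (a₀ : ℝ) (ha : 0 < a₀) (e : ℝ → ℝ)
    (hrange : ∀ r ≥ (0 : ℝ), 0 < e r ∧ e r ≤ 1)
    (himp : ∀ r > (0 : ℝ), e r + a₀ * r ^ ((1 : ℝ) / 5) * (e r) ^ ((3 : ℝ) / 5) = 1) :
    Tendsto (fun r => e r * a₀ ^ ((5 : ℝ) / 3) * r ^ ((1 : ℝ) / 3))
      atTop (nhds 1) := by
  -- Step 1: e r → 0
  have he0 : Tendsto e atTop (nhds 0) := by
    have hub : ∀ᶠ r in atTop, e r ≤ (a₀ * r ^ ((1 : ℝ) / 5))⁻¹ := by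
      filter_upwards [eventually_gt_atTop (0 : ℝ)] with r hr
      obtain ⟨hpos, hle1⟩ := hrange r hr.le
      have heq := himp r hr
      have hle : e r ≤ (e r) ^ ((3 : ℝ) / 5) := by
        calc e r = (e r) ^ (1 : ℝ) := (rpow_one _).symm
        _ ≤ (e r) ^ ((3 : ℝ) / 5) :=
          rpow_le_rpow_of_exponent_ge hpos hle1 (by norm_num)
      have hA : 0 < a₀ * r ^ ((1 : ℝ) / 5) := by positivity
      have h1 : a₀ * r ^ ((1 : ℝ) / 5) * e r ≤ 1 := by
        nlinarith [mul_le_mul_of_nonneg_left hle hA.le]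
      rw [inv_eq_one_div, le_div_iff₀ hA]
      nlinarith [h1]
    have hlb : ∀ᶠ r in atTop, (0 : ℝ) ≤ e r := by
      filter_upwards [eventually_ge_atTop (0 : ℝ)] with r hr
      exact (hrange r hr).1.le
    have hinv : Tendsto (fun r : ℝ => (a₀ * r ^ ((1 : ℝ) / 5))⁻¹) atTop (nhds 0) := by
      apply Tendsto.inv_tendsto_atTop
      exact (tendsto_rpow_atTop (by norm_num)).const_mul_atTop ha
    exact tendsto_of_tendsto_of_tendsto_of_le_of_le' tendsto_const_nhds hinv hlb hub
  -- Step 2: a₀ r^{1/5} e^{3/5} = 1 - e → 1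
  have h1e : Tendsto (fun r => (1 : ℝ) - e r) atTop (nhds 1) := by
    simpa using tendsto_const_nhds.sub he0
  -- Step 3: raise to power 5/3
  have hpow : Tendsto (fun r => ((1 : ℝ) - e r) ^ ((5 : ℝ) / 3)) atTop (nhds 1) := by
    have := h1e.rpow_const (p := (5 : ℝ) / 3) (Or.inl one_ne_zero)
    simpa using this
  refine hpow.congr' ?_
  filter_upwards [eventually_gt_atTop (0 : ℝ)] with r hr
  obtain ⟨hpos, _⟩ := hrange r hr.le
  have heq := himp r hr
  have : (1 : ℝ) - e r = a₀ * r ^ ((1 : ℝ) / 5) * (e r) ^ ((3 : ℝ) / 5) := by linarith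
  rw [this, mul_rpow (by positivity) (rpow_nonneg hpos.le _),
    mul_rpow ha.le (rpow_nonneg hr.le _), ← rpow_mul hr.le, ← rpow_mul hpos.le]
  norm_num
  ring
end

section
/- Let e : [0,∞) → (0,1] be non-increasing with e(0)=1, and assume there are a₀, b₀ > 0 and exponents 0 < γ < γ̄ such that |e(r) − 1 + a₀ r^γ| ≤ b₀ r^{γ̄} for all r ≥ 0. Define Ψ(ρ) = (ρ^{3/2}/2) ∫_0^1 (1 − e(√ρ · z)²) z³ dz for ρ > 0. Then for all r > 0, |Ψ(r²) − (a₀/(4+γ)) r^{3+γ}| ≤ C (r^{3+2γ} + r^{3+γ̄}) for a constant C depending only on a₀, b₀, γ, γ̄. -/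
open Real MeasureTheory intervalIntegral

/-- Energy-dissipation kernel `Ψ_e` associated to a restitution coefficient `e`. -/
noncomputable def Psi (e : ℝ → ℝ) (ρ : ℝ) : ℝ :=
  ρ ^ ((3 : ℝ) / 2) / 2 * ∫ z in (0 : ℝ)..1, (1 - (e (Real.sqrt ρ * z)) ^ 2) * z ^ 3

set_option maxHeartbeats 1600000 in
/-- Expansion of the dissipation kernel:
`|Ψ(r²) − (a₀/(4+γ)) r^{3+γ}| ≤ C (r^{3+2γ} + r^{3+γ̄})`. -/
theorem Psi_expansion (a₀ b₀ γ γbar : ℝ) (ha : 0 < a₀) (hb : 0 < b₀)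
    (hγ : 0 < γ) (hγγ : γ < γbar) :
    ∃ C > (0 : ℝ), ∀ e : ℝ → ℝ,
      (∀ r ≥ (0 : ℝ), 0 < e r ∧ e r ≤ 1) → e 0 = 1 → AntitoneOn e (Set.Ici 0) →
      (∀ r ≥ (0 : ℝ), |e r - 1 + a₀ * r ^ γ| ≤ b₀ * r ^ γbar) →
      ∀ r > (0 : ℝ),
        |Psi e (r ^ 2) - a₀ / (4 + γ) * r ^ (3 + γ)|
          ≤ C * (r ^ (3 + 2 * γ) + r ^ (3 + γbar)) := by
  refine ⟨a₀ ^ 2 + b₀ ^ 2 + a₀ + b₀ + 1, by positivity, ?_⟩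
  intro e he he0 hmono happrox r hr
  have hr0 : (0 : ℝ) ≤ r := hr.le
  have hsq : Real.sqrt (r ^ 2) = r := Real.sqrt_sq hr0
  have hpow : ((r ^ 2 : ℝ)) ^ ((3 : ℝ) / 2) = r ^ (3 : ℕ) := by
    rw [← Real.rpow_natCast r 2, ← Real.rpow_mul hr0]
    norm_num
  have hPsi : Psi e (r ^ 2)
      = r ^ 3 / 2 * ∫ z in (0 : ℝ)..1, (1 - (e (r * z)) ^ 2) * z ^ 3 := by
    rw [Psi, hsq, hpow]
  set I : ℝ := ∫ z in (0 : ℝ)..1, (1 - (e (r * z)) ^ 2) * z ^ 3 with hI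
  -- integrability
  have hanti : AntitoneOn (fun z => (e (r * z)) ^ 2) (Set.uIcc (0 : ℝ) 1) := by
    rw [Set.uIcc_of_le (by norm_num : (0:ℝ) ≤ 1)]
    intro x hx y hy hxy
    have hx0 : (0:ℝ) ≤ r * x := mul_nonneg hr0 hx.1
    have hy0 : (0:ℝ) ≤ r * y := mul_nonneg hr0 hy.1
    have h1 : e (r * y) ≤ e (r * x) :=
      hmono hx0 hy0 (mul_le_mul_of_nonneg_left hxy hr0)
    exact pow_le_pow_left₀ (he (r*y) hy0).1.le h1 2
  have hIe : IntervalIntegrable (fun z => (e (r * z)) ^ 2) volume 0 1 :=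
    hanti.intervalIntegrable
  have hIf : IntervalIntegrable (fun z => (1 - (e (r * z)) ^ 2) * z ^ 3) volume 0 1 :=
    (intervalIntegrable_const.sub hIe).mul_continuousOn
      (by fun_prop : Continuous fun z : ℝ => z ^ 3).continuousOn
  -- pointwise facts
  have hfacts : ∀ z ∈ Set.Icc (0:ℝ) 1,
      0 ≤ (1 - (e (r * z)) ^ 2) * z ^ 3 ∧ (1 - (e (r * z)) ^ 2) * z ^ 3 ≤ z ^ 3 := by
    intro z hz
    have hs0 : (0:ℝ) ≤ r * z := mul_nonneg hr0 hz.1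
    have hes := he (r * z) hs0
    have h1 : (e (r*z)) ^ 2 ≤ 1 := by nlinarith [hes.1, hes.2]
    have h2 : 0 ≤ (e (r*z)) ^ 2 := sq_nonneg _
    have hz3 : (0:ℝ) ≤ z ^ 3 := pow_nonneg hz.1 3
    constructor
    · exact mul_nonneg (by linarith) hz3
    · nlinarith
  have hrpow_nonneg : ∀ p : ℝ, 0 ≤ r ^ p := fun p => Real.rpow_nonneg hr0 p
  have hA0 : 0 ≤ r ^ (3 + 2*γ) := hrpow_nonneg _
  have hB0 : 0 ≤ r ^ (3 + γbar) := hrpow_nonneg _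
  rcases le_or_gt 1 r with h1r | h1r
  · -- trivial regime r ≥ 1
    have hIle : I ≤ 1/4 := by
      have h := intervalIntegral.integral_mono_on (by norm_num : (0:ℝ) ≤ 1) hIf
        ((continuous_pow 3).intervalIntegrable 0 1) (fun z hz => (hfacts z hz).2)
      rw [integral_pow] at h
      norm_num at h
      simpa [hI] using h
    have hInn : 0 ≤ I := by
      apply intervalIntegral.integral_nonneg (by norm_num : (0:ℝ) ≤ 1)
      exact fun z hz => (hfacts z hz).1
    have hr3 : (r:ℝ) ^ (3:ℕ) ≤ r ^ (3 + 2*γ) := by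
      rw [← Real.rpow_natCast r 3]
      exact Real.rpow_le_rpow_of_exponent_le h1r (by push_cast; linarith)
    have hrγ : r ^ (3 + γ) ≤ r ^ (3 + 2*γ) :=
      Real.rpow_le_rpow_of_exponent_le h1r (by linarith)
    have hcoef : a₀ / (4 + γ) ≤ a₀ := div_le_self ha.le (by linarith)
    have hrg0 : 0 ≤ r ^ (3+γ) := hrpow_nonneg _
    have hr30 : (0:ℝ) ≤ r ^ (3:ℕ) := pow_nonneg hr0 3
    have hX : r ^ 3 / 2 * I ≤ r ^ (3 + 2*γ) / 8 := by nlinarith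
    have hY : a₀ / (4 + γ) * r ^ (3+γ) ≤ a₀ * r ^ (3 + 2*γ) := by
      calc a₀ / (4 + γ) * r ^ (3+γ) ≤ a₀ * r ^ (3+γ) :=
            mul_le_mul_of_nonneg_right hcoef hrg0
        _ ≤ a₀ * r ^ (3 + 2*γ) := mul_le_mul_of_nonneg_left hrγ ha.le
    have hY0 : 0 ≤ a₀ / (4 + γ) * r ^ (3+γ) := by positivity
    rw [hPsi, abs_sub_le_iff]
    constructor
    · nlinarith [mul_nonneg (sq_nonneg a₀) hA0, mul_nonneg (sq_nonneg b₀) hA0,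
        mul_nonneg ha.le hA0, mul_nonneg hb.le hA0, mul_nonneg ha.le hB0,
        mul_nonneg hb.le hB0, mul_nonneg (sq_nonneg a₀) hB0, mul_nonneg (sq_nonneg b₀) hB0]
    · nlinarith [mul_nonneg (sq_nonneg a₀) hA0, mul_nonneg (sq_nonneg b₀) hA0,
        mul_nonneg ha.le hA0, mul_nonneg hb.le hA0, mul_nonneg ha.le hB0,
        mul_nonneg hb.le hB0, mul_nonneg (sq_nonneg a₀) hB0, mul_nonneg (sq_nonneg b₀) hB0,
        mul_nonneg hr30 hInn]
  · -- main regime r ≤ 1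
    have hr1 : r ≤ 1 := h1r.le
    set g : ℝ → ℝ := fun z => 2 * a₀ * r ^ γ * z ^ (γ + 3) with hg
    have hIg : IntervalIntegrable g volume 0 1 := by
      have : IntervalIntegrable (fun z : ℝ => z ^ (γ+3)) volume 0 1 :=
        intervalIntegrable_rpow (Or.inl (by linarith))
      simpa [hg, mul_assoc] using this.const_mul (2 * a₀ * r ^ γ)
    set J : ℝ := ∫ z in (0:ℝ)..1, g z with hJ
    have hJval : J = 2 * a₀ * r ^ γ / (γ + 4) := by
      rw [hJ]
      simp only [hg]
      rw [intervalIntegral.integral_const_mul,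
        integral_rpow (Or.inl (by linarith : (-1:ℝ) < γ + 3))]
      rw [Real.one_rpow, Real.zero_rpow (by linarith : γ + 3 + 1 ≠ 0)]
      ring
    -- pointwise bound
    set M : ℝ := 2 * b₀ * r ^ γbar + (a₀ + b₀) ^ 2 * (r ^ γ) ^ 2 with hM
    have hpt : ∀ z ∈ Set.uIoc (0:ℝ) 1,
        ‖(1 - (e (r * z)) ^ 2) * z ^ 3 - g z‖ ≤ M := by
      rw [Set.uIoc_of_le (by norm_num : (0:ℝ) ≤ 1)]
      intro z hz
      have hz0 : (0:ℝ) ≤ z := hz.1.le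
      have hz1 : z ≤ 1 := hz.2
      set s : ℝ := r * z with hs
      have hs0 : (0:ℝ) ≤ s := mul_nonneg hr0 hz0
      have hsr : s ≤ r := by
        have h := mul_le_mul_of_nonneg_left hz1 hr0
        simpa using h
      have hs1 : s ≤ 1 := le_trans hsr hr1
      have hes := he s hs0
      have happ := abs_le.mp (happrox s hs0)
      -- rewrite g z
      have hgz : g z = 2 * a₀ * s ^ γ * z ^ (3:ℕ) := by
        simp only [hg]
        rw [Real.rpow_add' hz0 (by linarith : γ + 3 ≠ 0), hs, Real.mul_rpow hr0 hz0]
        rw [← Real.rpow_natCast z 3]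
        push_cast
        ring
      have hfz : (1 - (e s) ^ 2) * z ^ 3 - g z = ((1 - (e s) ^ 2) - 2 * a₀ * s ^ γ) * z ^ 3 := by
        rw [hgz]; ring
      -- power bounds
      have hsγ : s ^ γ ≤ r ^ γ := Real.rpow_le_rpow hs0 hsr hγ.le
      have hsγb : s ^ γbar ≤ r ^ γbar := Real.rpow_le_rpow hs0 hsr (by linarith)
      have hspos : (0:ℝ) < s := mul_pos hr (hz.1)
      have hsγγb : s ^ γbar ≤ s ^ γ :=
        Real.rpow_le_rpow_of_exponent_ge hspos hs1 hγγ.le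
      have hsγ0 : 0 ≤ s ^ γ := Real.rpow_nonneg hs0 _
      have hsγb0 : 0 ≤ s ^ γbar := Real.rpow_nonneg hs0 _
      set u : ℝ := 1 - e s with hu
      have hu0 : 0 ≤ u := by simp only [hu]; linarith [hes.2]
      have huu : u ≤ a₀ * s ^ γ + b₀ * s ^ γbar := by
        simp only [hu]; linarith [happ.1]
      have huu' : u ≤ (a₀ + b₀) * s ^ γ := by
        have h1 : b₀ * s ^ γbar ≤ b₀ * s ^ γ := mul_le_mul_of_nonneg_left hsγγb hb.le
        calc u ≤ a₀ * s ^ γ + b₀ * s ^ γbar := huu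
          _ ≤ a₀ * s ^ γ + b₀ * s ^ γ := by linarith
          _ = (a₀ + b₀) * s ^ γ := by ring
      have hu2 : u ^ 2 ≤ (a₀ + b₀) ^ 2 * (r ^ γ) ^ 2 := by
        have h1 : u ^ 2 ≤ ((a₀ + b₀) * s ^ γ) ^ 2 := pow_le_pow_left₀ hu0 huu' 2
        have h2 : (a₀ + b₀) * s ^ γ ≤ (a₀ + b₀) * r ^ γ :=
          mul_le_mul_of_nonneg_left hsγ (by positivity)
        have h3 : ((a₀ + b₀) * s ^ γ) ^ 2 ≤ ((a₀ + b₀) * r ^ γ) ^ 2 :=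
          pow_le_pow_left₀ (by positivity) h2 2
        calc u ^ 2 ≤ ((a₀ + b₀) * r ^ γ) ^ 2 := le_trans h1 h3
          _ = (a₀ + b₀) ^ 2 * (r ^ γ) ^ 2 := by ring
      have hcore : |(1 - (e s) ^ 2) - 2 * a₀ * s ^ γ| ≤ M := by
        have hexp : (1 - (e s) ^ 2) = 2 * u - u ^ 2 := by simp only [hu]; ring
        have hb1 : b₀ * s ^ γbar ≤ b₀ * r ^ γbar := mul_le_mul_of_nonneg_left hsγb hb.le
        have hM0 : (0:ℝ) ≤ (a₀ + b₀) ^ 2 * (r ^ γ) ^ 2 :=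
          mul_nonneg (sq_nonneg _) (sq_nonneg _)
        rw [hexp, hM, abs_le]
        constructor
        · linarith [happ.2, hu2, hb1]
        · linarith [happ.1, sq_nonneg u, hb1, hM0]
      have hz3 : (0:ℝ) ≤ z ^ 3 := pow_nonneg hz0 3
      have hz31 : z ^ 3 ≤ 1 := pow_le_one₀ hz0 hz1
      rw [Real.norm_eq_abs, hfz, abs_mul, abs_of_nonneg hz3]
      calc |(1 - (e s) ^ 2) - 2 * a₀ * s ^ γ| * z ^ 3
          ≤ M * 1 := by
            apply mul_le_mul hcore hz31 hz3
            simp only [hM]; positivity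
        _ = M := mul_one M
    have habs : |I - J| ≤ M := by
      have h := intervalIntegral.norm_integral_le_of_norm_le_const hpt
      rw [intervalIntegral.integral_sub hIf hIg] at h
      rw [hI, hJ]
      simpa [Real.norm_eq_abs] using h
    -- identify the main term
    have hrγ3 : r ^ ((3:ℝ) + γ) = r ^ (3:ℕ) * r ^ γ := by
      rw [Real.rpow_add hr, ← Real.rpow_natCast r 3]
      norm_num
    have hmain : a₀ / (4 + γ) * r ^ (3 + γ) = r ^ 3 / 2 * J := by
      rw [hJval, hrγ3]
      field_simp
      ring
    have hfinal : |Psi e (r ^ 2) - a₀ / (4 + γ) * r ^ (3 + γ)| ≤ r ^ 3 / 2 * M := by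
      rw [hPsi, hmain, ← mul_sub, abs_mul, abs_of_nonneg (by positivity : (0:ℝ) ≤ r ^ 3 / 2)]
      exact mul_le_mul_of_nonneg_left habs (by positivity)
    -- convert powers
    have hrγ2 : r ^ (3:ℕ) * (r ^ γ) ^ 2 = r ^ (3 + 2*γ) := by
      rw [← Real.rpow_natCast (r ^ γ) 2, ← Real.rpow_natCast r 3,
        ← Real.rpow_mul hr0, ← Real.rpow_add hr]
      norm_num
      congr 1
      ring
    have hrγb : r ^ (3:ℕ) * r ^ γbar = r ^ (3 + γbar) := by
      rw [← Real.rpow_natCast r 3, ← Real.rpow_add hr]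
      norm_num
    have hbound : r ^ 3 / 2 * M ≤ (a₀^2 + b₀^2 + a₀ + b₀ + 1) * (r ^ (3 + 2*γ) + r ^ (3+γbar)) := by
      have : r ^ 3 / 2 * M = b₀ * (r ^ (3:ℕ) * r ^ γbar)
          + (a₀ + b₀)^2 / 2 * (r ^ (3:ℕ) * (r ^ γ) ^ 2) := by
        simp only [hM]; ring
      rw [this, hrγ2, hrγb]
      nlinarith [mul_nonneg (sq_nonneg (a₀ - b₀)) hA0, mul_nonneg (sq_nonneg a₀) hB0,
        mul_nonneg (sq_nonneg b₀) hB0, mul_nonneg ha.le hB0, mul_nonneg ha.le hA0,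
        mul_nonneg hb.le hA0, hA0, hB0]
    exact le_trans hfinal hbound
end
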